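/- A hyperplane Y = ker(f) in c₀, where f = (aₙ) ∈ ℓ¹ with ‖f‖ = 1, has property-(HB) in c₀ if and only if f = ±e_m for some m (i.e., Y is an M-summand in c₀). -/

import Mathlib

open NormedSpace Metric Set

namespace Paper

variable {X : Type*} [NormedAddCommGroup X] [NormedSpace ℝ X]

/-- The restriction of a continuous linear functional to a subspace. -/
noncomputable def restr (Y : Submodule ℝ X) (f : StrongDual ℝ X) : StrongDual ℝ ↥Y :=
  f.comp Y.subtypeL

/-- The annihilator `Y⊥` of a subspace `Y` in the dual. -/
def ann (Y : Submodule ℝ X) : Set (StrongDual ℝ X) := {f | ∀ y ∈ Y, f y = 0}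

/-- The set of norm-preserving (Hahn–Banach) extensions of `g : Y* ` to `X`. -/
def HB (Y : Submodule ℝ X) (g : StrongDual ℝ ↥Y) : Set (StrongDual ℝ X) :=
  {f | (∀ y : Y, f (y : X) = g y) ∧ ‖f‖ = ‖g‖}

/-- Best approximations to `x` from a set `A`. -/
def bestApprox {E : Type*} [NormedAddCommGroup E] (A : Set E) (x : E) : Set E :=
  {z ∈ A | ‖x - z‖ = infDist x A}

/-- Property-(U): every functional on `Y` has a unique norm-preserving extension to `X`. -/
def propU (Y : Submodule ℝ X) : Prop :=
  ∀ g : StrongDual ℝ ↥Y, ∃! f : StrongDual ℝ X, f ∈ HB Y g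

/-- `Y# `: the set of functionals whose norm equals the norm of their restriction to `Y`. -/
def sharp (Y : Submodule ℝ X) : Set (StrongDual ℝ X) := {f | ‖f‖ = ‖restr Y f‖}

/-- Property-(HB), stated via the decomposition `X* = Y# ⊕ Y⊥`. -/
def propHB (Y : Submodule ℝ X) : Prop :=
  (∀ f ∈ sharp Y, ∀ g ∈ sharp Y, f + g ∈ sharp Y) ∧
  (∀ (c : ℝ), ∀ f ∈ sharp Y, c • f ∈ sharp Y) ∧
  (∀ f : StrongDual ℝ X, ∃ g ∈ sharp Y, ∃ h ∈ ann Y, f = g + h) ∧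
  (∀ g ∈ sharp Y, ∀ h ∈ ann Y, h ≠ 0 → ‖g‖ < ‖g + h‖ ∧ ‖h‖ ≤ ‖g + h‖)

end Paper

open Paper

open ZeroAtInfty

/-! If `a = ± e_m`, then `c₀ = Y ⊕_∞ span {e_m}` for `Y = ker f`. Dually every functional `G`
satisfies `‖G‖ = ‖G|_Y‖ + |G e_m|`, so `Y#` is the hyperplane `{G | G e_m = 0}`, `Y⊥` is
spanned by the evaluation at `m`, and the four clauses of property-(HB) follow.

Conversely, if `a` has two nonzero coordinates `a_i, a_j` with `|a_j| ≤ |a_i|`, let `δ_j` be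
the evaluation at `j`. Then `g = -a_j δ_j` attains its norm on the unit ball of `Y` at
`e_j - (a_j / a_i) e_i`, so `g ∈ Y#`. But `g + f = f - a_j δ_j` has norm at most
`‖a‖₁ - |a_j| < ‖f‖`, which contradicts the inequality `‖h‖ ≤ ‖g + h‖` that property-(HB)
demands for `h = f ∈ Y⊥`. -/

lemma abs_add_abs_le_max_abs_add_abs_sub (x y : ℝ) : |x| + |y| ≤ max |x + y| |x - y| := by
  rcases abs_cases x with ⟨hx, _⟩ | ⟨hx, _⟩ <;> rcases abs_cases y with ⟨hy, _⟩ | ⟨hy, _⟩ <;>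
    simp only [hx, hy, le_max_iff] <;> grind [le_abs_self, neg_abs_le]

namespace ZeroAtInftyContinuousMap

variable {α : Type*} [TopologicalSpace α] {b : α → ℝ} {F : StrongDual ℝ C₀(α, ℝ)}

lemma abs_apply_le_norm (x : C₀(α, ℝ)) (a : α) : |x a| ≤ ‖x‖ := by
  simpa using BoundedContinuousFunction.norm_coe_le_norm x.toBCF a

lemma norm_le_of_forall_abs_le (x : C₀(α, ℝ)) {C : ℝ} (hC : 0 ≤ C) (h : ∀ a, |x a| ≤ C) :
    ‖x‖ ≤ C := by
  rw [← norm_toBCF_eq_norm]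
  exact (BoundedContinuousFunction.norm_le hC).mpr (by simpa using h)

noncomputable def evalCLM (a : α) : StrongDual ℝ C₀(α, ℝ) :=
  LinearMap.mkContinuous
    { toFun := fun x => x a
      map_add' := fun _ _ => rfl
      map_smul' := fun _ _ => rfl }
    1 (fun x => by simpa using abs_apply_le_norm x a)

@[simp] lemma evalCLM_apply (a : α) (x : C₀(α, ℝ)) : evalCLM a x = x a := rfl

lemma norm_evalCLM_le (a : α) : ‖evalCLM a‖ ≤ 1 :=
  LinearMap.mkContinuous_norm_le _ zero_le_one _

lemma summable_mul_apply (hb : Summable fun n => |b n|) (x : C₀(α, ℝ)) :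
    Summable fun n => b n * x n :=
  Summable.of_norm_bounded (hb.mul_right ‖x‖) fun n => by
    simpa [abs_mul] using mul_le_mul_of_nonneg_left (abs_apply_le_norm x n) (abs_nonneg (b n))

lemma opNorm_le_tsum_abs (hb : Summable fun n => |b n|) (hF : ∀ x, F x = ∑' n, b n * x n) :
    ‖F‖ ≤ ∑' n, |b n| :=
  F.opNorm_le_bound (tsum_nonneg fun _ => abs_nonneg _) fun x => by
    rw [hF, ← tsum_mul_right]
    exact tsum_of_norm_bounded (hb.mul_right ‖x‖).hasSum fun n => by
      simpa [abs_mul] using mul_le_mul_of_nonneg_left (abs_apply_le_norm x n) (abs_nonneg (b n))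

lemma opNorm_sub_smul_evalCLM_le [DecidableEq α] (hb : Summable fun n => |b n|)
    (hF : ∀ x, F x = ∑' n, b n * x n) (a : α) :
    ‖F - b a • evalCLM a‖ ≤ ∑' n, |b n| - |b a| := by
  have hupd (c : α → ℝ) (g : ℝ → ℝ → ℝ) (hg : ∀ r, g 0 r = 0) :
      (fun n => g (Function.update b a 0 n) (c n)) =
        Function.update (fun n => g (b n) (c n)) a 0 := by
    funext n
    rcases eq_or_ne n a with rfl | hn <;> simp [*]
  have hb' := hb.hasSum.update a 0
  rw [← hupd 0 (fun r _ => |r|) (by simp), zero_sub, neg_add_eq_sub] at hb'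
  refine (opNorm_le_tsum_abs hb'.summable fun x => ?_).trans_eq hb'.tsum_eq
  have hx := (summable_mul_apply hb x).hasSum.update a 0
  rw [← hupd x (· * ·) zero_mul, ← hF x, zero_sub, neg_add_eq_sub] at hx
  rw [hx.tsum_eq]
  simp

variable [DiscreteTopology α] [DecidableEq α]

noncomputable def single (a : α) (t : ℝ) : C₀(α, ℝ) where
  toFun := Pi.single a t
  continuous_toFun := continuous_of_discreteTopology
  zero_at_infty' := by
    rw [Filter.cocompact_eq_cofinite]
    refine tendsto_nhds_of_eventually_eq ?_
    filter_upwards [Filter.eventually_cofinite_ne a] with b hb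
    exact Pi.single_eq_of_ne hb _

@[simp] lemma coe_single (a : α) (t : ℝ) : ⇑(single a t) = Pi.single a t := rfl

lemma norm_add_smul_single_one {z : C₀(α, ℝ)} {a : α} (hz : z a = 0) (t : ℝ) :
    ‖z + t • single a 1‖ = max ‖z‖ |t| := by
  refine le_antisymm (norm_le_of_forall_abs_le _ (le_max_of_le_right (abs_nonneg t)) fun b => ?_)
    (max_le (norm_le_of_forall_abs_le _ (norm_nonneg _) fun b => ?_) ?_)
  · rcases eq_or_ne b a with rfl | hb
    · simp [hz]
    · simpa [hb] using le_max_of_le_left (abs_apply_le_norm z b)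
  · rcases eq_or_ne b a with rfl | hb
    · simp [hz]
    · simpa [hb] using abs_apply_le_norm (z + t • single a 1) b
  · simpa [hz] using abs_apply_le_norm (z + t • single a 1) a

lemma apply_single_of_forall_eq_tsum (hF : ∀ x, F x = ∑' n, b n * x n) (a : α) (t : ℝ) :
    F (single a t) = b a * t := by
  rw [hF, tsum_eq_single a fun n hn => by simp [hn]]
  simp

lemma tsum_abs_le_opNorm (hF : ∀ x, F x = ∑' n, b n * x n) : ∑' n, |b n| ≤ ‖F‖ := by
  refine Real.tsum_le_of_sum_le (fun n => abs_nonneg (b n)) fun s => ?_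
  set x := ∑ n ∈ s, single n (SignType.sign (b n) : ℝ)
  have hx : ‖x‖ ≤ 1 := norm_le_of_forall_abs_le _ zero_le_one fun k => by
    rw [← evalCLM_apply, map_sum]
    simp only [evalCLM_apply, coe_single, Finset.sum_pi_single]
    split_ifs
    · rcases SignType.sign (b k) with _ | _ | _ <;> simp
    · simp
  calc ∑ n ∈ s, |b n| = F x := by simp [x, map_sum, apply_single_of_forall_eq_tsum hF]
    _ ≤ ‖F‖ := F.unit_le_opNorm x hx |>.trans' (le_abs_self _)

end ZeroAtInftyContinuousMap

namespace Paper

variable {X : Type*} [NormedAddCommGroup X] [NormedSpace ℝ X]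

lemma norm_restr_le (Y : Submodule ℝ X) (G : StrongDual ℝ X) : ‖restr Y G‖ ≤ ‖G‖ :=
  (G.opNorm_comp_le _).trans (mul_le_of_le_one_right (norm_nonneg G) Y.norm_subtypeL_le)

lemma mem_sharp_of_norm_le_abs_apply {Y : Submodule ℝ X} {G : StrongDual ℝ X} {y : X}
    (hy : y ∈ Y) (hy1 : ‖y‖ ≤ 1) (hG : ‖G‖ ≤ |G y|) : G ∈ sharp Y :=
  le_antisymm (hG.trans ((restr Y G).unit_le_opNorm ⟨y, hy⟩ hy1)) (norm_restr_le Y G)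

section MSummand

variable {φ : StrongDual ℝ X} {e : X}

lemma sub_smul_mem_ker (hφe : φ e = 1) (x : X) :
    x - φ x • e ∈ LinearMap.ker (φ : X →ₗ[ℝ] ℝ) := by
  simp [hφe]

lemma norm_eq_norm_restr_ker_add (hφe : φ e = 1)
    (hM : ∀ z ∈ LinearMap.ker (φ : X →ₗ[ℝ] ℝ), ∀ t : ℝ, ‖z + t • e‖ = max ‖z‖ |t|)
    (G : StrongDual ℝ X) : ‖G‖ = ‖restr (LinearMap.ker (φ : X →ₗ[ℝ] ℝ)) G‖ + |G e| := by
  set Y := LinearMap.ker (φ : X →ₗ[ℝ] ℝ)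
  have he : ‖e‖ = 1 := by simpa using hM 0 Y.zero_mem 1
  have hGe : |G e| ≤ ‖G‖ := by simpa [he] using G.le_opNorm e
  refine le_antisymm (G.opNorm_le_bound (by positivity) fun x => ?_) ?_
  · have hx : ‖x‖ = max ‖x - φ x • e‖ |φ x| := by
      simpa using hM _ (sub_smul_mem_ker hφe x) (φ x)
    have hGx : G x = restr Y G ⟨_, sub_smul_mem_ker hφe x⟩ + φ x * G e := by simp [restr]
    calc ‖G x‖ ≤ ‖restr Y G‖ * ‖x - φ x • e‖ + |φ x| * |G e| := by
          rw [hGx, Real.norm_eq_abs, ← abs_mul]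
          exact (abs_add_le _ _).trans (add_le_add_left ((restr Y G).le_opNorm _) _)
      _ ≤ ‖restr Y G‖ * ‖x‖ + ‖x‖ * |G e| := by
          gcongr
          · exact hx ▸ le_max_left _ _
          · exact hx ▸ le_max_right _ _
      _ = (‖restr Y G‖ + |G e|) * ‖x‖ := by ring
  · suffices ‖restr Y G‖ ≤ ‖G‖ - |G e| by linarith
    refine (restr Y G).opNorm_le_bound (sub_nonneg.mpr hGe) fun z => ?_
    -- testing `G` on `z ± ‖z‖ e`, both of norm `‖z‖`, gains `‖z‖ |G e|` over `|G z|`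
    have hσ : ∀ σ : ℝ, |σ| = 1 → |G z + σ * (‖z‖ * G e)| ≤ ‖G‖ * ‖z‖ := fun σ hσ => by
      have := G.le_opNorm (z + (σ * ‖z‖) • e)
      rw [hM z z.2, abs_mul, hσ, one_mul, abs_norm, Submodule.coe_norm, max_self] at this
      simpa [mul_assoc] using this
    have hmax := abs_add_abs_le_max_abs_add_abs_sub (G z) (‖z‖ * G e)
    rw [abs_mul, abs_norm] at hmax
    have h1 := hσ 1 abs_one
    have h2 := hσ (-1) (by simp)
    simp only [one_mul, neg_one_mul, ← sub_eq_add_neg] at h1 h2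
    rw [Real.norm_eq_abs]
    change |G z| ≤ _
    linarith [hmax.trans (max_le h1 h2)]

lemma mem_sharp_ker_iff (hφe : φ e = 1)
    (hM : ∀ z ∈ LinearMap.ker (φ : X →ₗ[ℝ] ℝ), ∀ t : ℝ, ‖z + t • e‖ = max ‖z‖ |t|)
    {G : StrongDual ℝ X} : G ∈ sharp (LinearMap.ker (φ : X →ₗ[ℝ] ℝ)) ↔ G e = 0 := by
  change ‖G‖ = ‖restr _ G‖ ↔ _
  rw [norm_eq_norm_restr_ker_add hφe hM G]
  simp

lemma eq_smul_of_mem_ann_ker (hφe : φ e = 1) {H : StrongDual ℝ X}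
    (hH : H ∈ ann (LinearMap.ker (φ : X →ₗ[ℝ] ℝ))) : H = H e • φ := by
  ext x
  have := hH _ (sub_smul_mem_ker hφe x)
  simp only [map_sub, map_smul, smul_eq_mul] at this
  simp only [smul_apply, smul_eq_mul]
  linarith

theorem propHB_ker_of_norm_add_smul_eq_max (hφe : φ e = 1)
    (hM : ∀ z ∈ LinearMap.ker (φ : X →ₗ[ℝ] ℝ), ∀ t : ℝ, ‖z + t • e‖ = max ‖z‖ |t|) :
    propHB (LinearMap.ker (φ : X →ₗ[ℝ] ℝ)) := by
  have hnorm := norm_eq_norm_restr_ker_add hφe hM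
  set Y := LinearMap.ker (φ : X →ₗ[ℝ] ℝ)
  have hsharp (G : StrongDual ℝ X) : G ∈ sharp Y ↔ G e = 0 := mem_sharp_ker_iff hφe hM
  refine ⟨fun F hF G hG => ?_, fun c F hF => ?_, fun G => ?_, fun g hg h hh hne => ?_⟩
  · simp_all
  · simp_all
  · refine ⟨G - G e • φ, by simp [hsharp, hφe], G e • φ, fun y hy => ?_, by abel⟩
    simp [show φ y = 0 from hy]
  · have hhe : h e ≠ 0 := fun h0 => hne (by rw [eq_smul_of_mem_ann_ker hφe hh, h0, zero_smul])
    have hrestr_h : restr Y h = 0 := by ext z; exact hh z z.2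
    have hrestr_gh : restr Y (g + h) = restr Y g := by
      ext z
      change g z + h z = g z
      rw [hh z z.2, add_zero]
    have hgh : ‖g + h‖ = ‖g‖ + |h e| := by
      rw [hnorm, hrestr_gh, ← hg, add_apply, (hsharp g).mp hg, zero_add]
    have hh_norm : ‖h‖ = |h e| := by
      rw [hnorm h, hrestr_h, ContinuousLinearMap.opNorm_zero, zero_add]
    exact ⟨by linarith [abs_pos.mpr hhe], by linarith [norm_nonneg g]⟩

end MSummand

end Paper

namespace ZeroAtInftyContinuousMap

variable {α : Type*} [TopologicalSpace α] [DiscreteTopology α] [DecidableEq α]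
  {b : α → ℝ} {F : StrongDual ℝ C₀(α, ℝ)}

theorem propHB_ker_evalCLM (a : α) :
    propHB (LinearMap.ker (evalCLM a : C₀(α, ℝ) →ₗ[ℝ] ℝ)) :=
  propHB_ker_of_norm_add_smul_eq_max (e := single a 1) (by simp)
    fun _ hz t => norm_add_smul_single_one (LinearMap.mem_ker.mp hz) t

theorem not_propHB_ker_of_two_ne_zero (hb : Summable fun n => |b n|)
    (hF : ∀ x, F x = ∑' n, b n * x n) {i j : α} (hij : i ≠ j) (hi : b i ≠ 0) (hj : b j ≠ 0)
    (hji : |b j| ≤ |b i|) : ¬ propHB (LinearMap.ker (F : C₀(α, ℝ) →ₗ[ℝ] ℝ)) := by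
  intro hHB
  set y := single j 1 - single i (b j / b i)
  have hyY : y ∈ LinearMap.ker (F : C₀(α, ℝ) →ₗ[ℝ] ℝ) := by
    change F y = 0
    simp [y, apply_single_of_forall_eq_tsum hF, mul_div_cancel₀ _ hi]
  have hy : ‖y‖ ≤ 1 := norm_le_of_forall_abs_le _ zero_le_one fun k => by
    rcases eq_or_ne k j with rfl | hkj
    · simp [y, hij]
    rcases eq_or_ne k i with rfl | hki
    · simpa [y, hkj, abs_div] using div_le_one_of_le₀ hji (abs_nonneg _)
    · simp [y, hkj, hki]
  set g := -(b j • evalCLM j) with hg_def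
  have hg : g ∈ sharp (LinearMap.ker (F : C₀(α, ℝ) →ₗ[ℝ] ℝ)) := by
    refine mem_sharp_of_norm_le_abs_apply hyY hy ?_
    calc ‖g‖ = ‖b j • evalCLM j‖ := ContinuousLinearMap.opNorm_neg _
      _ ≤ ‖b j‖ * ‖evalCLM j‖ := ContinuousLinearMap.opNorm_smul_le _ _
      _ ≤ |b j| := mul_le_of_le_one_right (abs_nonneg _) (norm_evalCLM_le j)
      _ = |g y| := by simp [g, y, hij.symm]
  have hF0 : F ≠ 0 := fun h0 => hi <| by
    simpa [h0] using (apply_single_of_forall_eq_tsum hF i 1).symm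
  have hFg : ‖F‖ ≤ ‖g + F‖ := (hHB.2.2.2 g hg F (fun _ hy => LinearMap.mem_ker.mp hy) hF0).2
  have hgF : ‖g + F‖ ≤ ∑' n, |b n| - |b j| := by
    rw [show g + F = F - b j • evalCLM j by rw [hg_def]; abel]
    exact opNorm_sub_smul_evalCLM_le hb hF j
  linarith [tsum_abs_le_opNorm hF, abs_pos.mpr hj]

end ZeroAtInftyContinuousMap

lemma exists_eq_one_or_neg_one_of_hasSum_abs {α : Type*} {b : α → ℝ}
    (hb : HasSum (fun n => |b n|) 1) (h : ∀ i j, b i ≠ 0 → b j ≠ 0 → i = j) :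
    ∃ m, (∀ n, n ≠ m → b n = 0) ∧ (b m = 1 ∨ b m = -1) := by
  obtain ⟨m, hm⟩ : ∃ m, b m ≠ 0 := by
    by_contra! h0
    have : HasSum (fun n => |b n|) 0 := by simp [h0]
    exact one_ne_zero (hb.unique this)
  have hzero (n : α) (hn : n ≠ m) : b n = 0 := by_contra fun hbn => hn (h n m hbn hm)
  have hbm : |b m| = 1 := (hasSum_single m fun n hn => by simp [hzero n hn]).unique hb
  exact ⟨m, hzero, (abs_eq zero_le_one).mp hbm⟩

open ZeroAtInftyContinuousMap

/-- a hyperplane `Y = ker f` of `c₀`, where `f` is induced by `(aₙ) ∈ ℓ¹` with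
`‖(aₙ)‖₁ = 1`, has property-(HB) in `c₀` if and only if `(aₙ) = ± e_m` for some `m`
(i.e. `Y` is an `M`-summand in `c₀`). -/
theorem stmt13 (a : lp (fun _ : ℕ => ℝ) 1) (ha1 : ‖a‖ = 1)
    (f : StrongDual ℝ C₀(ℕ, ℝ)) (hf : ∀ x : C₀(ℕ, ℝ), f x = ∑' n, a n * x n) :
    propHB (LinearMap.ker (f : C₀(ℕ, ℝ) →ₗ[ℝ] ℝ)) ↔
      ∃ m : ℕ, (∀ n : ℕ, n ≠ m → a n = 0) ∧ (a m = 1 ∨ a m = -1) := by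
  have ha : HasSum (fun n => |a n|) 1 := by
    simpa [ha1] using lp.hasSum_norm (p := 1) (by norm_num) a
  constructor
  · intro hHB
    refine exists_eq_one_or_neg_one_of_hasSum_abs ha fun i j hi hj => ?_
    by_contra hij
    rcases le_total |a j| |a i| with hji | hij'
    · exact not_propHB_ker_of_two_ne_zero ha.summable hf hij hi hj hji hHB
    · exact not_propHB_ker_of_two_ne_zero ha.summable hf (Ne.symm hij) hj hi hij' hHB
  · rintro ⟨m, hm, hpm⟩
    have ham : a m ≠ 0 := by rcases hpm with h | h <;> simp [h]
    have hfm : f = a m • evalCLM m := ContinuousLinearMap.ext fun x => by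
      rw [hf, tsum_eq_single m fun n hn => by simp [hm n hn]]
      simp
    rw [hfm, ContinuousLinearMap.toLinearMap_smul, LinearMap.ker_smul _ _ ham]
    exact propHB_ker_evalCLM m
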